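/- Corollary (quadratic bound with the constant C_a(p), antisymmetric increments). Let p = (p_i)_{i∈V} be a time-independent probability vector (p_i ≥ 0, Σ_{i∈V} p_i = 1) such that Σ_{i∈V} p_i · (1/τ)∫₀^τ γ_i(t) dt = 0. Define C_a(p) := Σ_{(i,j)∈E} (1/τ)∫₀^τ (p_i w_{ij}(t) − p_j w_{ji}(t))² / (𝒬_{ij}(t) + 𝒬_{ji}(t)) dt. Then limsup_{y→y_{α,γ}, y≠y_{α,γ}} I_{α,γ}(y)/(y − y_{α,γ})² ≤ C_a(p)/(4 y_{α,γ}²), where the limsup is taken in [0,∞]. -/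

import Mathlib

/-!
Perturb the stationary state along a line through a second periodic state. The flux
`c i j = w i j * w j i * (p i * π j + p j * π i) / (𝒬 i j + 𝒬 j i)` is symmetric in `i, j`, so
`(c, p)` solves the continuity equation with the constant density `p`; the antisymmetry of `α`
and `∑ i, p i * ⟨γ i⟩ = 0` (time averages) make its observable vanish. Hence
`(1 - u) • (𝒬, π) + u • (c, p)` is admissible for `y = (1 - u) * y₀`, and it stays nonnegative
for `|u| * D ≤ 1`, with a constant `D` coming from the compactness of one period.

Its cost is controlled by `Φ(q, p) ≤ (q - p)² / (2m)` for `0 < m ≤ q, p`, applied with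
`m = (1 - |u| * D) * 𝒬 i j`: the deviation is `Q - ρ w = -u * 𝒬 i j * d i j` with
`d i j = (p i * w i j - p j * w j i) / (𝒬 i j + 𝒬 j i)`, and pairing each edge with its reverse
gives `∑ 𝒬 i j * d i j ^ 2 = C_a(p) / 2`. So `I((1 - u) * y₀) ≤ u² C_a(p) / (4 (1 - |u| D))`;
dividing by `(y - y₀)² = u² y₀²` and letting `u → 0` gives the bound.
-/

open MeasureTheory Filter
open scoped Topology ENNReal

/-- The function `Φ(q,p) = q log(q/p) − q + p` on `[0,∞) × [0,∞)` with values in `[0,∞]`,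
with the conventions `Φ(0,p) = p` and `Φ(q,0) = ∞` for `q > 0`. -/
noncomputable def Phi (q p : ℝ) : ℝ≥0∞ :=
  if q = 0 then ENNReal.ofReal p
  else if p = 0 then ⊤
  else ENNReal.ofReal (q * Real.log (q / p) - q + p)

lemma mul_log_div_sub_add_le {q p m : ℝ} (hm : 0 < m) (hmq : m ≤ q) (hmp : m ≤ p) :
    q * Real.log (q / p) - q + p ≤ (q - p) ^ 2 / (2 * m) := by
  have hq : 0 < q := hm.trans_le hmq
  have hp : 0 < p := hm.trans_le hmp
  suffices q * Real.log (q / p) - q + p ≤ (q - p) ^ 2 / (2 * min q p) from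
    this.trans (by gcongr; exact le_min hmq hmp)
  rcases le_total p q with hpq | hqp
  · have hlog : Real.log (q / p) ≤ (q / p - (q / p)⁻¹) / 2 := by
      rw [← Real.sinh_log (by positivity)]
      exact Real.self_le_sinh_iff.2 (Real.log_nonneg ((one_le_div hp).2 hpq))
    rw [min_eq_right hpq]
    calc q * Real.log (q / p) - q + p ≤ q * ((q / p - (q / p)⁻¹) / 2) - q + p := by gcongr
      _ = (q - p) ^ 2 / (2 * p) := by field_simp; ring
  · have hlog : 2 * (p - q) / (p + q) ≤ Real.log (p / q) := by
      have h := Real.le_log_one_add_of_nonneg (div_nonneg (sub_nonneg.2 hqp) hq.le)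
      rwa [show 1 + (p - q) / q = p / q by field_simp; ring,
        show 2 * ((p - q) / q) / ((p - q) / q + 2) = 2 * (p - q) / (p + q) by field_simp; ring] at h
    rw [min_eq_left hqp, ← neg_neg (Real.log (q / p)), ← Real.log_inv, inv_div]
    calc q * -Real.log (p / q) - q + p ≤ q * -(2 * (p - q) / (p + q)) - q + p := by gcongr
      _ = (q - p) ^ 2 / (p + q) := by field_simp; ring
      _ ≤ (q - p) ^ 2 / (2 * q) := by gcongr; linarith

lemma Phi_le_sq_div {q p m : ℝ} (hm : 0 < m) (hmq : m ≤ q) (hmp : m ≤ p) :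
    Phi q p ≤ ENNReal.ofReal ((q - p) ^ 2 / (2 * m)) := by
  rw [Phi, if_neg (hm.trans_le hmq).ne', if_neg (hm.trans_le hmp).ne']
  exact ENNReal.ofReal_le_ofReal (mul_log_div_sub_add_le hm hmq hmp)

lemma one_sub_abs_mul_mul_le {a b u D : ℝ} (ha : 0 ≤ a) (hb : 0 ≤ b) (hab : a ≤ (D - 1) * b) :
    (1 - |u| * D) * b ≤ (1 - u) * b + u * a := by
  rcases le_total 0 u with hu | hu
  · rw [abs_of_nonneg hu]; nlinarith
  · rw [abs_of_nonpos hu]; nlinarith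

lemma sum_sum_mul_eq_zero_of_antisymm {ι R : Type*} [Fintype ι] [CommRing R] [NoZeroDivisors R]
    [CharZero R] {a b : ι → ι → R} (ha : ∀ i j, a i j = -a j i) (hb : ∀ i j, b i j = b j i) :
    ∑ i, ∑ j, a i j * b i j = 0 := by
  refine self_eq_neg.1 ?_
  conv_lhs => rw [Finset.sum_comm]
  simp only [← Finset.sum_neg_distrib]
  exact Finset.sum_congr rfl fun i _ => Finset.sum_congr rfl fun j _ => by
    rw [ha j i, hb j i, neg_mul]

lemma sum_swap_eq_of_symm {α M : Type*} [AddCommMonoid M] {E : Finset (α × α)}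
    (hE : ∀ i j, (i, j) ∈ E ↔ (j, i) ∈ E) (f : α × α → M) :
    ∑ e ∈ E, f e.swap = ∑ e ∈ E, f e :=
  Finset.sum_nbij' Prod.swap Prod.swap (fun _ he => (hE _ _).1 he) (fun _ he => (hE _ _).1 he)
    (fun _ _ => rfl) (fun _ _ => rfl) fun _ _ => rfl

lemma Function.Periodic.eventually_le_mul {f g : ℝ → ℝ} {τ : ℝ} (hf : Function.Periodic f τ)
    (hg : Function.Periodic g τ) (hτ : τ ≠ 0) (hfc : Continuous f) (hgc : Continuous g)
    (hg0 : ∀ t, 0 < g t) : ∀ᶠ C in atTop, ∀ t, f t ≤ C * g t := by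
  obtain ⟨C, hC⟩ :=
    ((hf.div hg).isBounded_of_continuous hτ (hfc.div hgc fun t => (hg0 t).ne')).bddAbove
  filter_upwards [eventually_ge_atTop C] with C' hC' t
  exact (div_le_iff₀ (hg0 t)).1 ((hC ⟨t, rfl⟩).trans hC')

lemma ofReal_mul_setLIntegral_Ioc {f : ℝ → ℝ} {a b c : ℝ} (hab : a ≤ b) (hc : 0 ≤ c)
    (hf : Continuous f) (hf0 : ∀ t, 0 ≤ f t) :
    ENNReal.ofReal c * ∫⁻ t in Set.Ioc a b, ENNReal.ofReal (f t) =
      ENNReal.ofReal (c * ∫ t in a..b, f t) := by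
  rw [intervalIntegral.integral_of_le hab, ENNReal.ofReal_mul hc,
    ofReal_integral_eq_lintegral_ofReal hf.integrableOn_Ioc (Eventually.of_forall hf0)]

lemma limsup_div_sq_le_of_eventually_le {f : ℝ → ℝ≥0∞} {B : ℝ → ℝ} {y₀ : ℝ} (hy₀ : y₀ ≠ 0)
    (hB : ContinuousAt B 0) (hf : ∀ᶠ u in 𝓝 0, f ((1 - u) * y₀) ≤ ENNReal.ofReal (u ^ 2 * B u)) :
    limsup (fun y => f y / ENNReal.ofReal ((y - y₀) ^ 2)) (𝓝[≠] y₀) ≤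
      ENNReal.ofReal (B 0 / y₀ ^ 2) := by
  set φ : ℝ → ℝ := fun y => 1 - y / y₀ with hφ_def
  have hφ : Tendsto φ (𝓝 y₀) (𝓝 0) := by
    have : Tendsto φ (𝓝 y₀) (𝓝 (1 - y₀ / y₀)) := tendsto_const_nhds.sub (tendsto_id.div_const y₀)
    rwa [div_self hy₀, sub_self] at this
  have hle : ∀ᶠ y in 𝓝[≠] y₀,
      f y / ENNReal.ofReal ((y - y₀) ^ 2) ≤ ENNReal.ofReal (B (φ y) / y₀ ^ 2) := by
    filter_upwards [nhdsWithin_le_nhds (hφ.eventually hf), self_mem_nhdsWithin] with y hy hne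
    have hsq : 0 < (y - y₀) ^ 2 := by
      have : y - y₀ ≠ 0 := sub_ne_zero.2 hne
      positivity
    rw [show (1 - φ y) * y₀ = y by rw [hφ_def]; field_simp; ring,
      show φ y ^ 2 * B (φ y) = (y - y₀) ^ 2 * (B (φ y) / y₀ ^ 2) by rw [hφ_def]; field_simp; ring,
      ENNReal.ofReal_mul hsq.le] at hy
    calc f y / ENNReal.ofReal ((y - y₀) ^ 2)
        ≤ ENNReal.ofReal ((y - y₀) ^ 2) * ENNReal.ofReal (B (φ y) / y₀ ^ 2) /
            ENNReal.ofReal ((y - y₀) ^ 2) := ENNReal.div_le_div_right hy _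
      _ = ENNReal.ofReal (B (φ y) / y₀ ^ 2) := by
        rw [mul_comm,
          ENNReal.mul_div_cancel_right (ENNReal.ofReal_pos.2 hsq).ne' ENNReal.ofReal_ne_top]
  have hlim : Tendsto (fun y => ENNReal.ofReal (B (φ y) / y₀ ^ 2)) (𝓝[≠] y₀)
      (𝓝 (ENNReal.ofReal (B 0 / y₀ ^ 2))) :=
    (ENNReal.continuous_ofReal.tendsto _).comp
      (((hB.tendsto.comp hφ).div_const _).mono_left nhdsWithin_le_nhds)
  exact (limsup_le_limsup hle).trans_eq hlim.limsup_eq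

section Flows

variable {V : Type} (w : V → V → ℝ → ℝ) (pi : V → ℝ → ℝ) (p : V → ℝ)

-- Off the edge set numerator and denominator both vanish, and `x / 0 = 0` makes these `0`.
noncomputable def symmFlow (i j : V) (t : ℝ) : ℝ :=
  w i j t * w j i t * (p i * pi j t + p j * pi i t) / (pi i t * w i j t + pi j t * w j i t)

noncomputable def edgeDefect (i j : V) (t : ℝ) : ℝ :=
  (p i * w i j t - p j * w j i t) / (pi i t * w i j t + pi j t * w j i t)

lemma symmFlow_comm (i j : V) (t : ℝ) : symmFlow w pi p i j t = symmFlow w pi p j i t := by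
  unfold symmFlow; ring

variable {w pi p}

lemma symmFlow_nonneg {i j : V} {t : ℝ} (hwij : 0 ≤ w i j t) (hwji : 0 ≤ w j i t)
    (hπi : 0 ≤ pi i t) (hπj : 0 ≤ pi j t) (hpi : 0 ≤ p i) (hpj : 0 ≤ p j) :
    0 ≤ symmFlow w pi p i j t := by
  unfold symmFlow; positivity

lemma symmFlow_eq_zero {i j : V} {t : ℝ} (h : w i j t = 0) : symmFlow w pi p i j t = 0 := by
  simp [symmFlow, h]

lemma symmFlow_sub_mul {i j : V} {t : ℝ} (h : pi i t * w i j t + pi j t * w j i t ≠ 0) :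
    symmFlow w pi p i j t - p i * w i j t = -(pi i t * w i j t * edgeDefect w pi p i j t) := by
  unfold symmFlow edgeDefect
  generalize hD : pi i t * w i j t + pi j t * w j i t = D at h ⊢
  field_simp
  linear_combination p i * w i j t * hD

variable (w pi p)

lemma mul_edgeDefect_sq_add_mul_edgeDefect_sq (i j : V) (t : ℝ) :
    pi i t * w i j t * edgeDefect w pi p i j t ^ 2 + pi j t * w j i t * edgeDefect w pi p j i t ^ 2
      = (p i * w i j t - p j * w j i t) ^ 2 / (pi i t * w i j t + pi j t * w j i t) := by
  unfold edgeDefect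
  rw [add_comm (pi j t * w j i t)]
  generalize hD : pi i t * w i j t + pi j t * w j i t = D
  rcases eq_or_ne D 0 with h | h
  · simp [h]
  · field_simp
    linear_combination (p i * w i j t - p j * w j i t) ^ 2 * hD

end Flows

section PeriodicChain

variable {V : Type} [Fintype V]

structure IsPeriodicSteadyState (τ : ℝ) (E : Finset (V × V)) (w : V → V → ℝ → ℝ)
    (pi : V → ℝ → ℝ) : Prop where
  continuous_rate : ∀ i j, Continuous (w i j)
  periodic_rate : ∀ i j, Function.Periodic (w i j) τ
  rate_pos : ∀ i j, (i, j) ∈ E → ∀ t, 0 < w i j t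
  rate_eq_zero : ∀ i j, (i, j) ∉ E → ∀ t, w i j t = 0
  contDiff_density : ∀ i, ContDiff ℝ 1 (pi i)
  periodic_density : ∀ i, Function.Periodic (pi i) τ
  density_pos : ∀ i t, 0 < pi i t
  sum_density : ∀ t, ∑ i, pi i t = 1
  continuity_eq : ∀ i t, deriv (pi i) t + (∑ j, pi i t * w i j t) - (∑ j, pi j t * w j i t) = 0

structure IsPeriodicFlow (τ : ℝ) (E : Finset (V × V)) (Q : V → V → ℝ → ℝ) (ρ : V → ℝ → ℝ) :
    Prop where
  continuous_flux : ∀ i j, Continuous (Q i j)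
  periodic_flux : ∀ i j, Function.Periodic (Q i j) τ
  flux_nonneg : ∀ i j t, 0 ≤ Q i j t
  flux_eq_zero : ∀ i j, (i, j) ∉ E → ∀ t, Q i j t = 0
  contDiff_density : ∀ i, ContDiff ℝ 1 (ρ i)
  periodic_density : ∀ i, Function.Periodic (ρ i) τ
  density_nonneg : ∀ i t, 0 ≤ ρ i t
  sum_density : ∀ t, ∑ i, ρ i t = 1
  continuity_eq : ∀ i t, deriv (ρ i) t + (∑ j, Q i j t) - (∑ j, Q j i t) = 0

noncomputable def observable (τ : ℝ) (α Q : V → V → ℝ → ℝ) (γ ρ : V → ℝ → ℝ) : ℝ :=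
  (1 / τ) * (∫ t in (0:ℝ)..τ, ((∑ i, ∑ j, α i j t * Q i j t) + ∑ i, γ i t * ρ i t))

noncomputable def cost (τ : ℝ) (E : Finset (V × V)) (w Q : V → V → ℝ → ℝ) (ρ : V → ℝ → ℝ) : ℝ≥0∞ :=
  ∑ e ∈ E, ENNReal.ofReal (1 / τ) *
    (∫⁻ t in Set.Ioc (0:ℝ) τ, Phi (Q e.1 e.2 t) (ρ e.1 t * w e.1 e.2 t))

lemma sInf_le_cost {τ y : ℝ} {E : Finset (V × V)} {α w Q : V → V → ℝ → ℝ} {γ ρ : V → ℝ → ℝ}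
    (h : IsPeriodicFlow τ E Q ρ) (hy : observable τ α Q γ ρ = y) :
    sInf { c : ℝ≥0∞ |
      ∃ (Q : V → V → ℝ → ℝ) (ρ : V → ℝ → ℝ),
        (∀ i j, Continuous (Q i j)) ∧
        (∀ i j, Function.Periodic (Q i j) τ) ∧
        (∀ i j t, 0 ≤ Q i j t) ∧
        (∀ i j, (i, j) ∉ E → ∀ t, Q i j t = 0) ∧
        (∀ i, ContDiff ℝ 1 (ρ i)) ∧
        (∀ i, Function.Periodic (ρ i) τ) ∧
        (∀ i t, 0 ≤ ρ i t) ∧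
        (∀ t : ℝ, ∑ i, ρ i t = 1) ∧
        (∀ i t, deriv (ρ i) t + (∑ j, Q i j t) - (∑ j, Q j i t) = 0) ∧
        ((1 / τ) * (∫ t in (0:ℝ)..τ,
          ((∑ i, ∑ j, α i j t * Q i j t) + ∑ i, γ i t * ρ i t)) = y) ∧
        c = ∑ e ∈ E, ENNReal.ofReal (1 / τ) *
          (∫⁻ t in Set.Ioc (0:ℝ) τ, Phi (Q e.1 e.2 t) (ρ e.1 t * w e.1 e.2 t)) } ≤
      cost τ E w Q ρ :=
  sInf_le ⟨Q, ρ, h.1, h.2, h.3, h.4, h.5, h.6, h.7, h.8, h.9, hy, rfl⟩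

lemma IsPeriodicFlow.continuous_density {τ : ℝ} {E : Finset (V × V)} {Q : V → V → ℝ → ℝ}
    {ρ : V → ℝ → ℝ} (h : IsPeriodicFlow τ E Q ρ) (i : V) : Continuous (ρ i) :=
  (h.contDiff_density i).continuous

lemma IsPeriodicFlow.affineCombination {τ : ℝ} {E : Finset (V × V)} {Q Q' : V → V → ℝ → ℝ}
    {ρ ρ' : V → ℝ → ℝ} (h : IsPeriodicFlow τ E Q ρ) (h' : IsPeriodicFlow τ E Q' ρ') {u : ℝ}
    (hQ : ∀ i j t, 0 ≤ (1 - u) * Q i j t + u * Q' i j t)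
    (hρ : ∀ i t, 0 ≤ (1 - u) * ρ i t + u * ρ' i t) :
    IsPeriodicFlow τ E (fun i j t => (1 - u) * Q i j t + u * Q' i j t)
      (fun i t => (1 - u) * ρ i t + u * ρ' i t) where
  continuous_flux i j := by
    have := h.continuous_flux i j; have := h'.continuous_flux i j; fun_prop
  periodic_flux i j t := by simp only [h.periodic_flux i j t, h'.periodic_flux i j t]
  flux_nonneg := hQ
  flux_eq_zero i j hij t := by simp [h.flux_eq_zero i j hij t, h'.flux_eq_zero i j hij t]
  contDiff_density i := by
    have := h.contDiff_density i; have := h'.contDiff_density i; fun_prop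
  periodic_density i t := by simp only [h.periodic_density i t, h'.periodic_density i t]
  density_nonneg := hρ
  sum_density t := by
    simp only [Finset.sum_add_distrib, ← Finset.mul_sum, h.sum_density, h'.sum_density]; ring
  continuity_eq i t := by
    have hd := (h.contDiff_density i).differentiable one_ne_zero t
    have hd' := (h'.contDiff_density i).differentiable one_ne_zero t
    have hderiv : HasDerivAt (fun t => (1 - u) * ρ i t + u * ρ' i t)
        ((1 - u) * deriv (ρ i) t + u * deriv (ρ' i) t) t :=
      (hd.hasDerivAt.const_mul _).add (hd'.hasDerivAt.const_mul _)
    rw [hderiv.deriv]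
    simp only [Finset.sum_add_distrib, ← Finset.mul_sum]
    linear_combination (1 - u) * h.continuity_eq i t + u * h'.continuity_eq i t

lemma observable_affineCombination {τ u : ℝ} {E : Finset (V × V)} {α Q Q' : V → V → ℝ → ℝ}
    {γ ρ ρ' : V → ℝ → ℝ} (hα : ∀ i j, Continuous (α i j)) (hγ : ∀ i, Continuous (γ i))
    (h : IsPeriodicFlow τ E Q ρ) (h' : IsPeriodicFlow τ E Q' ρ') :
    observable τ α (fun i j t => (1 - u) * Q i j t + u * Q' i j t) γ
        (fun i t => (1 - u) * ρ i t + u * ρ' i t) =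
      (1 - u) * observable τ α Q γ ρ + u * observable τ α Q' γ ρ' := by
  have hcont : ∀ {Q : V → V → ℝ → ℝ} {ρ : V → ℝ → ℝ}, IsPeriodicFlow τ E Q ρ →
      Continuous fun t => (∑ i, ∑ j, α i j t * Q i j t) + ∑ i, γ i t * ρ i t := by
    intro Q ρ h
    have := h.continuous_flux; have := h.continuous_density; fun_prop
  have hmix : ∀ t, ((∑ i, ∑ j, α i j t * ((1 - u) * Q i j t + u * Q' i j t)) +
      ∑ i, γ i t * ((1 - u) * ρ i t + u * ρ' i t)) =
      (1 - u) * ((∑ i, ∑ j, α i j t * Q i j t) + ∑ i, γ i t * ρ i t) +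
        u * ((∑ i, ∑ j, α i j t * Q' i j t) + ∑ i, γ i t * ρ' i t) := fun t => by
    simp only [mul_add, mul_left_comm _ (1 - u), mul_left_comm _ u, Finset.sum_add_distrib,
      ← Finset.mul_sum]
    ring
  simp only [observable, hmix]
  rw [intervalIntegral.integral_add (((hcont h).const_mul _).intervalIntegrable _ _)
      (((hcont h').const_mul _).intervalIntegrable _ _),
    intervalIntegral.integral_const_mul, intervalIntegral.integral_const_mul]
  ring

lemma observable_symmFlow_eq_zero {τ : ℝ} {α : V → V → ℝ → ℝ} {γ : V → ℝ → ℝ} {p : V → ℝ}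
    (hα : ∀ i j t, α i j t = -α j i t) (hγ : ∀ i, Continuous (γ i))
    (hp : ∑ i, p i * ((1 / τ) * ∫ t in (0:ℝ)..τ, γ i t) = 0) (w : V → V → ℝ → ℝ)
    (pi : V → ℝ → ℝ) : observable τ α (symmFlow w pi p) γ (fun i _ => p i) = 0 := by
  have hflow : ∀ t, ∑ i, ∑ j, α i j t * symmFlow w pi p i j t = 0 := fun t =>
    sum_sum_mul_eq_zero_of_antisymm (fun i j => hα i j t) fun i j => symmFlow_comm w pi p i j t
  simp only [observable, hflow, zero_add]
  rw [intervalIntegral.integral_finsetSum, Finset.mul_sum]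
  · refine (Finset.sum_congr rfl fun i _ => ?_).trans hp
    rw [intervalIntegral.integral_mul_const]
    ring
  · exact fun i _ => ((hγ i).mul continuous_const).intervalIntegrable _ _

section SteadyState

variable {τ : ℝ} {E : Finset (V × V)} {w : V → V → ℝ → ℝ} {pi : V → ℝ → ℝ}

namespace IsPeriodicSteadyState

lemma rate_nonneg (hs : IsPeriodicSteadyState τ E w pi) (i j : V) (t : ℝ) : 0 ≤ w i j t := by
  by_cases hij : (i, j) ∈ E
  · exact (hs.rate_pos i j hij t).le
  · exact (hs.rate_eq_zero i j hij t).ge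

lemma continuous_density (hs : IsPeriodicSteadyState τ E w pi) (i : V) : Continuous (pi i) :=
  (hs.contDiff_density i).continuous

lemma flux_add_reverse_flux_pos (hs : IsPeriodicSteadyState τ E w pi) {i j : V}
    (hij : (i, j) ∈ E) (t : ℝ) :
    0 < pi i t * w i j t + pi j t * w j i t := by
  have := hs.rate_pos i j hij t
  have := hs.density_pos i t
  have := hs.rate_nonneg j i t
  have := hs.density_pos j t
  positivity

lemma isPeriodicFlow (hs : IsPeriodicSteadyState τ E w pi) :
    IsPeriodicFlow τ E (fun i j t => pi i t * w i j t) pi where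
  continuous_flux i j := (hs.continuous_density i).mul (hs.continuous_rate i j)
  periodic_flux i j t := by simp only [hs.periodic_density i t, hs.periodic_rate i j t]
  flux_nonneg i j t := mul_nonneg (hs.density_pos i t).le (hs.rate_nonneg i j t)
  flux_eq_zero i j hij t := by simp [hs.rate_eq_zero i j hij t]
  contDiff_density := hs.contDiff_density
  periodic_density := hs.periodic_density
  density_nonneg i t := (hs.density_pos i t).le
  sum_density := hs.sum_density
  continuity_eq := hs.continuity_eq

lemma continuous_symmFlow (hs : IsPeriodicSteadyState τ E w pi) (p : V → ℝ) (i j : V) :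
    Continuous (symmFlow w pi p i j) := by
  by_cases hij : (i, j) ∈ E
  · have := hs.continuous_rate; have := hs.continuous_density
    exact Continuous.div (by fun_prop) (by fun_prop) fun t =>
      (hs.flux_add_reverse_flux_pos hij t).ne'
  · rw [show symmFlow w pi p i j = fun _ => 0 from
      funext fun t => symmFlow_eq_zero (hs.rate_eq_zero i j hij t)]
    exact continuous_const

lemma periodic_symmFlow (hs : IsPeriodicSteadyState τ E w pi) (p : V → ℝ) (i j : V) :
    Function.Periodic (symmFlow w pi p i j) τ := fun t => by
  simp only [symmFlow, hs.periodic_rate _ _ t, hs.periodic_density _ t]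

lemma isPeriodicFlow_symmFlow (hs : IsPeriodicSteadyState τ E w pi) {p : V → ℝ}
    (hp : ∀ i, 0 ≤ p i) (hp_sum : ∑ i, p i = 1) :
    IsPeriodicFlow τ E (symmFlow w pi p) (fun i _ => p i) where
  continuous_flux := hs.continuous_symmFlow p
  periodic_flux := hs.periodic_symmFlow p
  flux_nonneg i j t := symmFlow_nonneg (hs.rate_nonneg i j t) (hs.rate_nonneg j i t)
    (hs.density_pos i t).le (hs.density_pos j t).le (hp i) (hp j)
  flux_eq_zero i j hij t := symmFlow_eq_zero (hs.rate_eq_zero i j hij t)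
  contDiff_density _ := contDiff_const
  periodic_density _ _ := rfl
  density_nonneg i _ := hp i
  sum_density _ := hp_sum
  continuity_eq i t := by
    simp only [deriv_const, zero_add, sub_eq_zero]
    exact Finset.sum_congr rfl fun j _ => symmFlow_comm w pi p i j t

lemma continuous_edgeDefect (hs : IsPeriodicSteadyState τ E w pi) (p : V → ℝ) {i j : V}
    (hij : (i, j) ∈ E) : Continuous (edgeDefect w pi p i j) := by
  have := hs.continuous_rate; have := hs.continuous_density
  exact Continuous.div (by fun_prop) (by fun_prop) fun t => (hs.flux_add_reverse_flux_pos hij t).ne'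

lemma symmFlow_nonneg (hs : IsPeriodicSteadyState τ E w pi) {p : V → ℝ} (hp : ∀ i, 0 ≤ p i)
    (i j : V) (t : ℝ) : 0 ≤ symmFlow w pi p i j t :=
  _root_.symmFlow_nonneg (hs.rate_nonneg i j t) (hs.rate_nonneg j i t) (hs.density_pos i t).le
    (hs.density_pos j t).le (hp i) (hp j)

lemma exists_symmFlow_le (hs : IsPeriodicSteadyState τ E w pi) (hτ : τ ≠ 0) (p : V → ℝ) :
    ∃ D, (∀ i j t, symmFlow w pi p i j t ≤ (D - 1) * (pi i t * w i j t)) ∧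
      ∀ i t, p i ≤ (D - 1) * pi i t := by
  have hflow : ∀ᶠ C in atTop, ∀ i j t, symmFlow w pi p i j t ≤ C * (pi i t * w i j t) := by
    simp only [eventually_all]
    intro i j
    by_cases hij : (i, j) ∈ E
    · exact (hs.periodic_symmFlow p i j).eventually_le_mul (hs.isPeriodicFlow.periodic_flux i j) hτ
        (hs.continuous_symmFlow p i j) (hs.isPeriodicFlow.continuous_flux i j)
        fun t => mul_pos (hs.density_pos i t) (hs.rate_pos i j hij t)
    · exact Eventually.of_forall fun C t => by
        simp [symmFlow_eq_zero (hs.rate_eq_zero i j hij t), hs.rate_eq_zero i j hij t]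
  have hdens : ∀ᶠ C in atTop, ∀ i t, p i ≤ C * pi i t :=
    eventually_all.2 fun i => Function.Periodic.eventually_le_mul (fun _ => rfl)
      (hs.periodic_density i) hτ continuous_const (hs.continuous_density i) (hs.density_pos i)
  obtain ⟨C, hC⟩ := (hflow.and hdens).exists
  exact ⟨C + 1, by simpa using hC⟩

variable {p : V → ℝ} {D u : ℝ}

lemma isPeriodicFlow_mix (hs : IsPeriodicSteadyState τ E w pi) (hp : ∀ i, 0 ≤ p i)
    (hp_sum : ∑ i, p i = 1) (hc : ∀ i j t, symmFlow w pi p i j t ≤ (D - 1) * (pi i t * w i j t))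
    (hpD : ∀ i t, p i ≤ (D - 1) * pi i t) (hu : |u| * D ≤ 1) :
    IsPeriodicFlow τ E (fun i j t => (1 - u) * (pi i t * w i j t) + u * symmFlow w pi p i j t)
      (fun i t => (1 - u) * pi i t + u * p i) :=
  hs.isPeriodicFlow.affineCombination (hs.isPeriodicFlow_symmFlow hp hp_sum)
    (fun i j t => (mul_nonneg (by linarith) (hs.isPeriodicFlow.flux_nonneg i j t)).trans
      (one_sub_abs_mul_mul_le (hs.symmFlow_nonneg hp i j t) (hs.isPeriodicFlow.flux_nonneg i j t)
        (hc i j t)))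
    (fun i t => (mul_nonneg (by linarith) (hs.density_pos i t).le).trans
      (one_sub_abs_mul_mul_le (hp i) (hs.density_pos i t).le (hpD i t)))

lemma Phi_mix_le (hs : IsPeriodicSteadyState τ E w pi) (hp : ∀ i, 0 ≤ p i)
    (hc : ∀ i j t, symmFlow w pi p i j t ≤ (D - 1) * (pi i t * w i j t))
    (hpD : ∀ i t, p i ≤ (D - 1) * pi i t) (hu : |u| * D < 1) {i j : V} (hij : (i, j) ∈ E)
    (t : ℝ) :
    Phi ((1 - u) * (pi i t * w i j t) + u * symmFlow w pi p i j t)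
        (((1 - u) * pi i t + u * p i) * w i j t) ≤
      ENNReal.ofReal (u ^ 2 / (2 * (1 - |u| * D)) *
        (pi i t * w i j t * edgeDefect w pi p i j t ^ 2)) := by
  have hQ : 0 < pi i t * w i j t := mul_pos (hs.density_pos i t) (hs.rate_pos i j hij t)
  have hm : 0 < (1 - |u| * D) * (pi i t * w i j t) := mul_pos (by linarith) hQ
  have hdens : (1 - |u| * D) * (pi i t * w i j t) ≤ ((1 - u) * pi i t + u * p i) * w i j t := by
    rw [← mul_assoc]
    exact mul_le_mul_of_nonneg_right
      (one_sub_abs_mul_mul_le (hp i) (hs.density_pos i t).le (hpD i t)) (hs.rate_nonneg i j t)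
  refine (Phi_le_sq_div hm (one_sub_abs_mul_mul_le (hs.symmFlow_nonneg hp i j t) hQ.le (hc i j t))
    hdens).trans_eq ?_
  rw [show (1 - u) * (pi i t * w i j t) + u * symmFlow w pi p i j t -
      ((1 - u) * pi i t + u * p i) * w i j t = u * (symmFlow w pi p i j t - p i * w i j t) by ring,
    symmFlow_sub_mul (hs.flux_add_reverse_flux_pos hij t).ne']
  congr 1
  field_simp

lemma sum_integral_mul_edgeDefect_sq (hs : IsPeriodicSteadyState τ E w pi)
    (hE : ∀ i j, (i, j) ∈ E ↔ (j, i) ∈ E) (p : V → ℝ) :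
    ∑ e ∈ E, (1 / τ) * ∫ t in (0:ℝ)..τ, pi e.1 t * w e.1 e.2 t * edgeDefect w pi p e.1 e.2 t ^ 2 =
      (∑ e ∈ E, (1 / τ) * (∫ t in (0:ℝ)..τ, (p e.1 * w e.1 e.2 t - p e.2 * w e.2 e.1 t) ^ 2
        / (pi e.1 t * w e.1 e.2 t + pi e.2 t * w e.2 e.1 t))) / 2 := by
  have hcont : ∀ e ∈ E,
      Continuous fun t => pi e.1 t * w e.1 e.2 t * edgeDefect w pi p e.1 e.2 t ^ 2 := fun e he =>
    (hs.isPeriodicFlow.continuous_flux e.1 e.2).mul ((hs.continuous_edgeDefect p he).pow 2)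
  set F : V × V → ℝ := fun e =>
    (1 / τ) * ∫ t in (0:ℝ)..τ, pi e.1 t * w e.1 e.2 t * edgeDefect w pi p e.1 e.2 t ^ 2 with hF
  rw [eq_div_iff two_ne_zero, mul_two]
  nth_rewrite 2 [← sum_swap_eq_of_symm hE F]
  rw [← Finset.sum_add_distrib]
  refine Finset.sum_congr rfl fun e he => ?_
  rw [hF, ← mul_add, ← intervalIntegral.integral_add ((hcont e he).intervalIntegrable _ _)
    ((hcont e.swap ((hE _ _).1 he)).intervalIntegrable _ _)]
  simp only [Prod.fst_swap, Prod.snd_swap, mul_edgeDefect_sq_add_mul_edgeDefect_sq]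

lemma cost_mix_le (hs : IsPeriodicSteadyState τ E w pi) (hτ : 0 < τ)
    (hE : ∀ i j, (i, j) ∈ E ↔ (j, i) ∈ E) (hp : ∀ i, 0 ≤ p i)
    (hc : ∀ i j t, symmFlow w pi p i j t ≤ (D - 1) * (pi i t * w i j t))
    (hpD : ∀ i t, p i ≤ (D - 1) * pi i t) (hu : |u| * D < 1) {Cap : ℝ}
    (hCap : Cap = ∑ e ∈ E, (1 / τ) * (∫ t in (0:ℝ)..τ,
      (p e.1 * w e.1 e.2 t - p e.2 * w e.2 e.1 t) ^ 2
        / (pi e.1 t * w e.1 e.2 t + pi e.2 t * w e.2 e.1 t))) :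
    cost τ E w (fun i j t => (1 - u) * (pi i t * w i j t) + u * symmFlow w pi p i j t)
        (fun i t => (1 - u) * pi i t + u * p i) ≤
      ENNReal.ofReal (u ^ 2 * (Cap / (4 * (1 - |u| * D)))) := by
  have hD : 0 < 1 - |u| * D := by linarith
  set k := u ^ 2 / (2 * (1 - |u| * D)) with hk
  set G : V × V → ℝ → ℝ := fun e t => pi e.1 t * w e.1 e.2 t * edgeDefect w pi p e.1 e.2 t ^ 2
  have hG_cont : ∀ e ∈ E, Continuous fun t => k * G e t := fun e he =>
    continuous_const.mul ((hs.isPeriodicFlow.continuous_flux e.1 e.2).mul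
      ((hs.continuous_edgeDefect p he).pow 2))
  have hG_nonneg : ∀ e t, 0 ≤ k * G e t := fun e t =>
    mul_nonneg (by positivity) (mul_nonneg (hs.isPeriodicFlow.flux_nonneg e.1 e.2 t) (sq_nonneg _))
  calc _ ≤ ∑ e ∈ E, ENNReal.ofReal (1 / τ) *
        ∫⁻ t in Set.Ioc (0:ℝ) τ, ENNReal.ofReal (k * G e t) :=
        Finset.sum_le_sum fun e he =>
          mul_le_mul_right (lintegral_mono fun t => hs.Phi_mix_le hp hc hpD hu he t) _
    _ = ∑ e ∈ E, ENNReal.ofReal ((1 / τ) * ∫ t in (0:ℝ)..τ, k * G e t) :=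
        Finset.sum_congr rfl fun e he =>
          ofReal_mul_setLIntegral_Ioc hτ.le (by positivity) (hG_cont e he) (hG_nonneg e)
    _ = ENNReal.ofReal (∑ e ∈ E, (1 / τ) * ∫ t in (0:ℝ)..τ, k * G e t) :=
        (ENNReal.ofReal_sum_of_nonneg fun e _ => mul_nonneg (by positivity)
          (intervalIntegral.integral_nonneg hτ.le fun t _ => hG_nonneg e t)).symm
    _ = ENNReal.ofReal (k * (Cap / 2)) := by
        rw [hCap, ← hs.sum_integral_mul_edgeDefect_sq hE, Finset.mul_sum]
        refine congrArg _ (Finset.sum_congr rfl fun e _ => ?_)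
        rw [intervalIntegral.integral_const_mul]
        ring
    _ = ENNReal.ofReal (u ^ 2 * (Cap / (4 * (1 - |u| * D)))) := by
        rw [hk]
        congr 1
        field_simp
        ring

end IsPeriodicSteadyState

end SteadyState

end PeriodicChain

theorem stmt5_general
    {V : Type} [Fintype V]
    (E : Finset (V × V))
    (hE_symm : ∀ i j : V, (i, j) ∈ E ↔ (j, i) ∈ E)
    (τ : ℝ) (hτ : 0 < τ)
    (w : V → V → ℝ → ℝ)
    (hw_cont : ∀ i j, Continuous (w i j))
    (hw_per : ∀ i j, Function.Periodic (w i j) τ)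
    (hw_pos : ∀ i j, (i, j) ∈ E → ∀ t, 0 < w i j t)
    (hw_zero : ∀ i j, (i, j) ∉ E → ∀ t, w i j t = 0)
    (pi : V → ℝ → ℝ)
    (hpi_diff : ∀ i, ContDiff ℝ 1 (pi i))
    (hpi_per : ∀ i, Function.Periodic (pi i) τ)
    (hpi_pos : ∀ i t, 0 < pi i t)
    (hpi_sum : ∀ t : ℝ, ∑ i, pi i t = 1)
    (hpi_cont_eq : ∀ i t, deriv (pi i) t
      + (∑ j, pi i t * w i j t) - (∑ j, pi j t * w j i t) = 0)
    (α : V → V → ℝ → ℝ)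
    (hα_cont : ∀ i j, Continuous (α i j))
    (hα_anti : ∀ i j (t : ℝ), α i j t = - α j i t)
    (γ : V → ℝ → ℝ)
    (hγ_cont : ∀ i, Continuous (γ i))
    (y0 : ℝ)
    (hy0 : y0 = (1 / τ) * (∫ t in (0:ℝ)..τ,
      ((∑ i, ∑ j, α i j t * (pi i t * w i j t)) + ∑ i, γ i t * pi i t)))
    (hy0_ne : y0 ≠ 0)
    (Iag : ℝ → ℝ≥0∞)
    (hI : ∀ y : ℝ, Iag y = sInf { c : ℝ≥0∞ |
      ∃ (Q : V → V → ℝ → ℝ) (ρ : V → ℝ → ℝ),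
        (∀ i j, Continuous (Q i j)) ∧
        (∀ i j, Function.Periodic (Q i j) τ) ∧
        (∀ i j t, 0 ≤ Q i j t) ∧
        (∀ i j, (i, j) ∉ E → ∀ t, Q i j t = 0) ∧
        (∀ i, ContDiff ℝ 1 (ρ i)) ∧
        (∀ i, Function.Periodic (ρ i) τ) ∧
        (∀ i t, 0 ≤ ρ i t) ∧
        (∀ t : ℝ, ∑ i, ρ i t = 1) ∧
        (∀ i t, deriv (ρ i) t + (∑ j, Q i j t) - (∑ j, Q j i t) = 0) ∧
        ((1 / τ) * (∫ t in (0:ℝ)..τ,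
          ((∑ i, ∑ j, α i j t * Q i j t) + ∑ i, γ i t * ρ i t)) = y) ∧
        c = ∑ e ∈ E, ENNReal.ofReal (1 / τ) *
          (∫⁻ t in Set.Ioc (0:ℝ) τ, Phi (Q e.1 e.2 t) (ρ e.1 t * w e.1 e.2 t)) })
    -- the probability vector p
    (p : V → ℝ) (hp_nonneg : ∀ i, 0 ≤ p i) (hp_sum : ∑ i, p i = 1)
    (hp_γ : ∑ i, p i * ((1 / τ) * (∫ t in (0:ℝ)..τ, γ i t)) = 0)
    (Cap : ℝ)
    (hCap : Cap = ∑ e ∈ E, (1 / τ) * (∫ t in (0:ℝ)..τ,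
      (p e.1 * w e.1 e.2 t - p e.2 * w e.2 e.1 t) ^ 2
        / (pi e.1 t * w e.1 e.2 t + pi e.2 t * w e.2 e.1 t))) :
    Filter.limsup (fun y : ℝ => Iag y / ENNReal.ofReal ((y - y0) ^ 2)) (𝓝[≠] y0)
      ≤ ENNReal.ofReal (Cap / (4 * y0 ^ 2)) := by
  have hs : IsPeriodicSteadyState τ E w pi :=
    ⟨hw_cont, hw_per, hw_pos, hw_zero, hpi_diff, hpi_per, hpi_pos, hpi_sum, hpi_cont_eq⟩
  have hflow := hs.isPeriodicFlow_symmFlow hp_nonneg hp_sum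
  obtain ⟨D, hc, hpD⟩ := hs.exists_symmFlow_le hτ.ne' p
  have hrate : ∀ u, |u| * D < 1 →
      Iag ((1 - u) * y0) ≤ ENNReal.ofReal (u ^ 2 * (Cap / (4 * (1 - |u| * D)))) := by
    intro u hu
    have hy : observable τ α (fun i j t => pi i t * w i j t) γ pi = y0 := hy0.symm
    rw [hI]
    refine (sInf_le_cost (hs.isPeriodicFlow_mix hp_nonneg hp_sum hc hpD hu.le) ?_).trans
      (hs.cost_mix_le hτ hE_symm hp_nonneg hc hpD hu hCap)
    refine (observable_affineCombination hα_cont hγ_cont hs.isPeriodicFlow hflow).trans ?_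
    rw [hy, observable_symmFlow_eq_zero hα_anti hγ_cont hp_γ]
    ring
  have hsmall : ∀ᶠ u in 𝓝 (0:ℝ), |u| * D < 1 := by
    have : Tendsto (fun u : ℝ => |u| * D) (𝓝 0) (𝓝 0) :=
      Continuous.tendsto' (by fun_prop) _ _ (by simp)
    exact this.eventually (gt_mem_nhds one_pos)
  refine (limsup_div_sq_le_of_eventually_le hy0_ne (B := fun u => Cap / (4 * (1 - |u| * D)))
    (continuousAt_const.div (by fun_prop) (by simp)) (hsmall.mono hrate)).trans_eq ?_
  simp [div_div]

theorem stmt5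
    {V : Type} [Fintype V] [Nonempty V]
    (E : Finset (V × V)) (hE : ∀ i : V, (i, i) ∉ E)
    (hE_symm : ∀ i j : V, (i, j) ∈ E ↔ (j, i) ∈ E)
    (τ : ℝ) (hτ : 0 < τ)
    (w : V → V → ℝ → ℝ)
    (hw_cont : ∀ i j, Continuous (w i j))
    (hw_per : ∀ i j, Function.Periodic (w i j) τ)
    (hw_pos : ∀ i j, (i, j) ∈ E → ∀ t, 0 < w i j t)
    (hw_zero : ∀ i j, (i, j) ∉ E → ∀ t, w i j t = 0)
    (pi : V → ℝ → ℝ)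
    (hpi_diff : ∀ i, ContDiff ℝ 1 (pi i))
    (hpi_per : ∀ i, Function.Periodic (pi i) τ)
    (hpi_pos : ∀ i t, 0 < pi i t)
    (hpi_sum : ∀ t : ℝ, ∑ i, pi i t = 1)
    (hpi_cont_eq : ∀ i t, deriv (pi i) t
      + (∑ j, pi i t * w i j t) - (∑ j, pi j t * w j i t) = 0)
    (α : V → V → ℝ → ℝ)
    (hα_cont : ∀ i j, Continuous (α i j))
    (hα_per : ∀ i j, Function.Periodic (α i j) τ)
    (hα_anti : ∀ i j (t : ℝ), α i j t = - α j i t)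
    (γ : V → ℝ → ℝ)
    (hγ_cont : ∀ i, Continuous (γ i))
    (hγ_per : ∀ i, Function.Periodic (γ i) τ)
    (y0 : ℝ)
    (hy0 : y0 = (1 / τ) * (∫ t in (0:ℝ)..τ,
      ((∑ i, ∑ j, α i j t * (pi i t * w i j t)) + ∑ i, γ i t * pi i t)))
    (hy0_ne : y0 ≠ 0)
    (Iag : ℝ → ℝ≥0∞)
    (hI : ∀ y : ℝ, Iag y = sInf { c : ℝ≥0∞ |
      ∃ (Q : V → V → ℝ → ℝ) (ρ : V → ℝ → ℝ),
        (∀ i j, Continuous (Q i j)) ∧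
        (∀ i j, Function.Periodic (Q i j) τ) ∧
        (∀ i j t, 0 ≤ Q i j t) ∧
        (∀ i j, (i, j) ∉ E → ∀ t, Q i j t = 0) ∧
        (∀ i, ContDiff ℝ 1 (ρ i)) ∧
        (∀ i, Function.Periodic (ρ i) τ) ∧
        (∀ i t, 0 ≤ ρ i t) ∧
        (∀ t : ℝ, ∑ i, ρ i t = 1) ∧
        (∀ i t, deriv (ρ i) t + (∑ j, Q i j t) - (∑ j, Q j i t) = 0) ∧
        ((1 / τ) * (∫ t in (0:ℝ)..τ,
          ((∑ i, ∑ j, α i j t * Q i j t) + ∑ i, γ i t * ρ i t)) = y) ∧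
        c = ∑ e ∈ E, ENNReal.ofReal (1 / τ) *
          (∫⁻ t in Set.Ioc (0:ℝ) τ, Phi (Q e.1 e.2 t) (ρ e.1 t * w e.1 e.2 t)) })
    -- the probability vector p
    (p : V → ℝ) (hp_nonneg : ∀ i, 0 ≤ p i) (hp_sum : ∑ i, p i = 1)
    (hp_γ : ∑ i, p i * ((1 / τ) * (∫ t in (0:ℝ)..τ, γ i t)) = 0)
    (Cap : ℝ)
    (hCap : Cap = ∑ e ∈ E, (1 / τ) * (∫ t in (0:ℝ)..τ,
      (p e.1 * w e.1 e.2 t - p e.2 * w e.2 e.1 t) ^ 2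
        / (pi e.1 t * w e.1 e.2 t + pi e.2 t * w e.2 e.1 t))) :
    Filter.limsup (fun y : ℝ => Iag y / ENNReal.ofReal ((y - y0) ^ 2)) (𝓝[≠] y0)
      ≤ ENNReal.ofReal (Cap / (4 * y0 ^ 2)) :=
  stmt5_general E hE_symm τ hτ w hw_cont hw_per hw_pos hw_zero pi hpi_diff hpi_per hpi_pos hpi_sum
    hpi_cont_eq α hα_cont hα_anti γ hγ_cont y0 hy0 hy0_ne Iag hI p hp_nonneg hp_sum hp_γ Cap hCap
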